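/- arXiv:2001.09300 — 2 statements merged into one kernel-verified Lean document; each statement's English description precedes it below -/
import Mathlib

section
/- Let p : (0,∞) → ℝ be twice continuously differentiable with p'(ρ) > 0 and 2p'(ρ) + ρ p''(ρ) > 0 for all ρ > 0, and set h(ρ) = ∫₁^ρ p'(τ)/τ dτ, H(ρ) = p'(ρ)/2 + h(ρ). Let ψ ∈ ℝ and assume there exist ρ₀, ρ₁ > 0 with h(ρ₀) > ψ and H(ρ₁) < ψ. Then: (a) there is a unique ρ* > 0 with H(ρ*) = ψ; (b) ψ − h(ρ*) = p'(ρ*)/2 > 0, so the critical speed q_cr(ψ) := (2ψ − 2h(ρ*))^{1/2} is well defined and positive; (c) for every q ≥ 0 and ρ > 0 satisfying the Bernoulli relation h(ρ) = ψ − q²/2, one has q² < p'(ρ) if and only if q < q_cr(ψ), and q² = p'(ρ) if and only if q = q_cr(ψ). -/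
/-!
Along the Bernoulli relation `h(ρ) = ψ - q²/2` one has `H(ρ) - ψ = (p'(ρ) - q²)/2`, so the
state is subsonic exactly when `H(ρ) > ψ = H(ρ*)`. Both `h' = p'/ρ` and
`H' = (2p' + ρp'')/(2ρ)` are positive, so `h` and `H` are strictly increasing; hence
`H(ρ) > H(ρ*)` iff `ρ > ρ*` iff `h(ρ) > h(ρ*)`, which through the Bernoulli relation reads
`q² < 2ψ - 2h(ρ*) = q_cr²`. The critical density itself comes from the intermediate value
theorem, since `H(ρ₀) > h(ρ₀) > ψ > H(ρ₁)`.
-/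

open Set

lemma strictMonoOn_of_hasDerivAt_pos {s : Set ℝ} {g g' : ℝ → ℝ} (hconv : Convex ℝ s)
    (hg : ∀ x ∈ s, HasDerivAt g (g' x) x) (hg' : ∀ x ∈ s, 0 < g' x) :
    StrictMonoOn g s :=
  strictMonoOn_of_hasDerivWithinAt_pos hconv
    (fun x hx ↦ (hg x hx).continuousAt.continuousWithinAt)
    (fun x hx ↦ (hg x (interior_subset hx)).hasDerivWithinAt)
    (fun x hx ↦ hg' x (interior_subset hx))

lemma hasDerivAt_integral_of_continuousOn {s : Set ℝ} [s.OrdConnected] {f : ℝ → ℝ} {a x : ℝ}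
    (hs : IsOpen s) (hf : ContinuousOn f s) (ha : a ∈ s) (hx : x ∈ s) :
    HasDerivAt (fun u ↦ ∫ τ in a..u, f τ) (f x) x :=
  intervalIntegral.integral_hasDerivAt_right
    ((hf.mono (OrdConnected.uIcc_subset ‹_› ha hx)).intervalIntegrable)
    (hf.stronglyMeasurableAtFilter hs x hx) (hf.continuousAt (hs.mem_nhds hx))

lemma existsUnique_eq_of_strictMonoOn {s : Set ℝ} [s.OrdConnected] {H : ℝ → ℝ} {ψ a b : ℝ}
    (hcont : ContinuousOn H s) (hmono : StrictMonoOn H s) (ha : a ∈ s) (hb : b ∈ s)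
    (hHa : H a ≤ ψ) (hHb : ψ ≤ H b) :
    ∃! x, x ∈ s ∧ H x = ψ := by
  have hab : uIcc a b ⊆ s := OrdConnected.uIcc_subset ‹_› ha hb
  obtain ⟨x, hx, hHx⟩ := intermediate_value_uIcc (hcont.mono hab) (mem_uIcc.2 (Or.inl ⟨hHa, hHb⟩))
  have hxs : x ∈ s := hab hx
  exact ⟨x, ⟨hxs, hHx⟩, fun y ⟨hys, hHy⟩ ↦ hmono.injOn hys hxs (hHy.trans hHx.symm)⟩

section Enthalpy

variable {f h H : ℝ → ℝ}

lemma hasDerivAt_of_eq_integral_div (hf : ContinuousOn f (Ioi 0))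
    (hh : ∀ ρ, h ρ = ∫ τ in (1:ℝ)..ρ, f τ / τ) {x : ℝ} (hx : 0 < x) :
    HasDerivAt h (f x / x) x := by
  rw [funext hh]
  exact hasDerivAt_integral_of_continuousOn isOpen_Ioi
    (hf.div continuousOn_id fun τ hτ ↦ ne_of_gt hτ) (mem_Ioi.2 one_pos) hx

lemma strictMonoOn_of_eq_integral_div (hf : ContinuousOn f (Ioi 0)) (hf₀ : ∀ ρ > 0, 0 < f ρ)
    (hh : ∀ ρ, h ρ = ∫ τ in (1:ℝ)..ρ, f τ / τ) : StrictMonoOn h (Ioi 0) :=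
  strictMonoOn_of_hasDerivAt_pos (convex_Ioi 0)
    (fun _ hx ↦ hasDerivAt_of_eq_integral_div hf hh hx) fun x hx ↦ div_pos (hf₀ x hx) hx

lemma hasDerivAt_half_add_integral_div (hf : ContDiffOn ℝ 1 f (Ioi 0))
    (hh : ∀ ρ, h ρ = ∫ τ in (1:ℝ)..ρ, f τ / τ) (hH : ∀ ρ, H ρ = f ρ / 2 + h ρ) {x : ℝ}
    (hx : 0 < x) : HasDerivAt H (deriv f x / 2 + f x / x) x := by
  have hfx : HasDerivAt f (deriv f x) x :=
    ((hf.differentiableOn one_ne_zero x hx).differentiableAt (isOpen_Ioi.mem_nhds hx)).hasDerivAt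
  rw [funext hH]
  exact (hfx.div_const 2).add (hasDerivAt_of_eq_integral_div hf.continuousOn hh hx)

lemma strictMonoOn_half_add_integral_div (hf : ContDiffOn ℝ 1 f (Ioi 0))
    (hf₁ : ∀ ρ > 0, 0 < 2 * f ρ + ρ * deriv f ρ)
    (hh : ∀ ρ, h ρ = ∫ τ in (1:ℝ)..ρ, f τ / τ) (hH : ∀ ρ, H ρ = f ρ / 2 + h ρ) :
    StrictMonoOn H (Ioi 0) := by
  refine strictMonoOn_of_hasDerivAt_pos (convex_Ioi 0)
    (fun _ hx ↦ hasDerivAt_half_add_integral_div hf hh hH hx) fun x hx ↦ ?_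
  have hx₀ : x ≠ 0 := ne_of_gt hx
  have hderiv : deriv f x / 2 + f x / x = (2 * f x + x * deriv f x) / (2 * x) := by
    field_simp
    ring
  rw [hderiv]
  exact div_pos (hf₁ x hx) (mul_pos two_pos hx)

end Enthalpy

section Bernoulli

variable {s : Set ℝ} {c h H : ℝ → ℝ} {ψ q ρ ρs : ℝ}

lemma sq_lt_iff_of_bernoulli (hh : StrictMonoOn h s) (hHmono : StrictMonoOn H s)
    (hH : ∀ x, H x = c x / 2 + h x) (hρs : ρs ∈ s) (hcrit : H ρs = ψ) (hρ : ρ ∈ s)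
    (hber : h ρ = ψ - q ^ 2 / 2) : q ^ 2 < c ρ ↔ q ^ 2 < c ρs := by
  have hHρ := hH ρ
  have hHρs := hH ρs
  calc q ^ 2 < c ρ ↔ H ρs < H ρ := by constructor <;> intro <;> linarith
    _ ↔ ρs < ρ := hHmono.lt_iff_lt hρs hρ
    _ ↔ h ρs < h ρ := (hh.lt_iff_lt hρs hρ).symm
    _ ↔ q ^ 2 < c ρs := by constructor <;> intro <;> linarith

lemma sq_eq_iff_of_bernoulli (hh : StrictMonoOn h s) (hHmono : StrictMonoOn H s)
    (hH : ∀ x, H x = c x / 2 + h x) (hρs : ρs ∈ s) (hcrit : H ρs = ψ) (hρ : ρ ∈ s)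
    (hber : h ρ = ψ - q ^ 2 / 2) : q ^ 2 = c ρ ↔ q ^ 2 = c ρs := by
  have hHρ := hH ρ
  have hHρs := hH ρs
  calc q ^ 2 = c ρ ↔ H ρ = H ρs := by constructor <;> intro <;> linarith
    _ ↔ ρ = ρs := hHmono.eq_iff_eq hρ hρs
    _ ↔ h ρ = h ρs := (hh.eq_iff_eq hρ hρs).symm
    _ ↔ q ^ 2 = c ρs := by constructor <;> intro <;> linarith

end Bernoulli

/-- Existence and uniqueness of the critical state and characterization of
subsonic/sonic speeds through the critical speed `q_cr(ψ) = √(2ψ − 2h(ρ*))`. -/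
theorem critical_speed
    (p h H : ℝ → ℝ)
    (hp : ContDiffOn ℝ 2 p (Set.Ioi 0))
    (hp1 : ∀ ρ > (0:ℝ), 0 < deriv p ρ)
    (hp2 : ∀ ρ > (0:ℝ), 0 < 2 * deriv p ρ + ρ * deriv (deriv p) ρ)
    (hh : ∀ ρ : ℝ, h ρ = ∫ τ in (1:ℝ)..ρ, deriv p τ / τ)
    (hH : ∀ ρ : ℝ, H ρ = deriv p ρ / 2 + h ρ)
    (ψ : ℝ)
    (hab : ∃ ρ₀ > (0:ℝ), ψ < h ρ₀)
    (hbe : ∃ ρ₁ > (0:ℝ), H ρ₁ < ψ) :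
    -- (a) unique critical density
    (∃! ρs : ℝ, 0 < ρs ∧ H ρs = ψ) ∧
    -- (b), (c)
    (∀ ρs : ℝ, 0 < ρs → H ρs = ψ →
      (ψ - h ρs = deriv p ρs / 2 ∧ 0 < Real.sqrt (2 * ψ - 2 * h ρs)) ∧
      (∀ q ρ : ℝ, 0 ≤ q → 0 < ρ → h ρ = ψ - q^2 / 2 →
        ((q^2 < deriv p ρ ↔ q < Real.sqrt (2 * ψ - 2 * h ρs)) ∧
         (q^2 = deriv p ρ ↔ q = Real.sqrt (2 * ψ - 2 * h ρs))))) := by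
  have hf : ContDiffOn ℝ 1 (deriv p) (Ioi 0) := hp.deriv_of_isOpen isOpen_Ioi (by norm_num)
  have hh_mono := strictMonoOn_of_eq_integral_div hf.continuousOn hp1 hh
  have hH_mono := strictMonoOn_half_add_integral_div hf hp2 hh hH
  obtain ⟨ρ₀, hρ₀, hψ₀⟩ := hab
  obtain ⟨ρ₁, hρ₁, hψ₁⟩ := hbe
  have hHρ₀ : ψ ≤ H ρ₀ := by linarith [hH ρ₀, hp1 ρ₀ hρ₀]
  have hH_cont : ContinuousOn H (Ioi 0) := fun _ hx ↦
    (hasDerivAt_half_add_integral_div hf hh hH hx).continuousAt.continuousWithinAt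
  refine ⟨existsUnique_eq_of_strictMonoOn (s := Ioi 0) hH_cont hH_mono hρ₁ hρ₀ hψ₁.le hHρ₀,
    fun ρs hρs hcrit ↦ ?_⟩
  have hq_cr : 2 * ψ - 2 * h ρs = deriv p ρs := by linarith [hH ρs]
  rw [hq_cr]
  refine ⟨⟨by linarith, Real.sqrt_pos.2 (hp1 ρs hρs)⟩, fun q ρ hq hρ hber ↦ ⟨?_, ?_⟩⟩
  · rw [sq_lt_iff_of_bernoulli hh_mono hH_mono hH hρs hcrit hρ hber, Real.lt_sqrt hq]
  · rw [sq_eq_iff_of_bernoulli hh_mono hH_mono hH hρs hcrit hρ hber, @eq_comm _ q,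
      Real.sqrt_eq_iff_eq_sq (hp1 ρs hρs).le hq, eq_comm]
end

section
/- Let H be a real Hilbert space, Q ⊆ ℝ, q̄ ∈ Q, and I : H × Q → ℝ. Assume: (i) there is c > 0 such that for every q ∈ Q and x, y ∈ H, I(x,q) + I(y,q) − 2I((x+y)/2, q) ≥ c‖x−y‖²; (ii) there are a > 0 and b ∈ ℝ with I(x,q) ≥ a‖x‖² − b for all x ∈ H, q ∈ Q; (iii) for each q ∈ Q, I(·,q) : H → ℝ is continuous, so that by (i)–(iii) there is a unique minimizer m(q) ∈ H of I(·,q); (iv) for every bounded set S ⊆ H, sup_{x ∈ S} |I(x,q) − I(x,q̄)| → 0 as q → q̄ in Q. Then m(q) → m(q̄) strongly in H as q → q̄; i.e., the minimizer depends continuously on the parameter at q̄. -/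
open Filter

/-- Continuous dependence of the unique minimizer of a uniformly convex, coercive,
continuous functional on a real parameter, given locally uniform convergence of the
functional on bounded sets. -/
theorem minimizer_continuous_dependence
    {H : Type*} [NormedAddCommGroup H] [InnerProductSpace ℝ H]
    (Q : Set ℝ) (qbar : ℝ) (hqbar : qbar ∈ Q)
    (I : H → ℝ → ℝ)
    (c : ℝ) (hc : 0 < c)
    -- (i) uniform midpoint convexity, uniformly in the parameter
    (hconv : ∀ q ∈ Q, ∀ x y : H,
      c * ‖x - y‖^2 ≤ I x q + I y q - 2 * I (((1:ℝ)/2) • (x + y)) q)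
    -- (ii) coercivity, uniform in the parameter
    (a : ℝ) (b : ℝ) (ha : 0 < a)
    (hcoer : ∀ x : H, ∀ q ∈ Q, a * ‖x‖^2 - b ≤ I x q)
    -- (iii) continuity in x for each parameter value
    (hcont : ∀ q ∈ Q, Continuous (fun x => I x q))
    -- the (unique) minimizers
    (m : ℝ → H) (hmin : ∀ q ∈ Q, ∀ x : H, I (m q) q ≤ I x q)
    -- (iv) uniform convergence of the functional on bounded sets as q → q̄ in Q
    (hunif : ∀ S : Set H, Bornology.IsBounded S → ∀ ε > (0:ℝ),
      ∀ᶠ q in nhdsWithin qbar Q, ∀ x ∈ S, |I x q - I x qbar| < ε) :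
    Tendsto m (nhdsWithin qbar Q) (nhds (m qbar)) := by
  set M := I (m qbar) qbar with hM
  have h1 : ∀ᶠ q in nhdsWithin qbar Q, ∀ x ∈ ({m qbar} : Set H), |I x q - I x qbar| < 1 :=
    hunif _ Bornology.isBounded_singleton 1 one_pos
  set K := Real.sqrt ((M + 1 + b) / a) with hK
  have hbound : ∀ᶠ q in nhdsWithin qbar Q, ‖m q‖ ≤ K := by
    filter_upwards [h1, eventually_mem_nhdsWithin] with q hq hqQ
    have h2 := abs_lt.mp (hq _ rfl)
    have h3 : I (m q) q ≤ I (m qbar) q := hmin q hqQ _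
    have h4 : a * ‖m q‖ ^ 2 - b ≤ I (m q) q := hcoer _ q hqQ
    have h6 : ‖m q‖ ^ 2 ≤ (M + 1 + b) / a := by
      rw [le_div_iff₀ ha]
      nlinarith [h2.1, h2.2]
    calc ‖m q‖ = Real.sqrt (‖m q‖ ^ 2) := by
            rw [Real.sqrt_sq (norm_nonneg _)]
      _ ≤ K := Real.sqrt_le_sqrt h6
  rw [Metric.tendsto_nhds]
  intro ε hε
  set S := Metric.closedBall (0 : H) (K + ‖m qbar‖ + 1) with hS
  have hε' : 0 < c * ε ^ 2 / 4 := by positivity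
  have h2 := hunif S Metric.isBounded_closedBall _ hε'
  filter_upwards [h2, hbound, eventually_mem_nhdsWithin] with q hq hqK hqQ
  have hKnn : 0 ≤ K := Real.sqrt_nonneg _
  have hmem1 : m qbar ∈ S := by
    simp only [hS, Metric.mem_closedBall, dist_zero_right]
    linarith
  have hmemq : m q ∈ S := by
    simp only [hS, Metric.mem_closedBall, dist_zero_right]
    linarith [norm_nonneg (m qbar)]
  have hmid : ((1:ℝ)/2) • (m q + m qbar) ∈ S := by
    simp only [hS, Metric.mem_closedBall, dist_zero_right]
    have : ‖((1:ℝ)/2) • (m q + m qbar)‖ ≤ (1/2) * (‖m q‖ + ‖m qbar‖) := by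
      rw [norm_smul]
      have h7 := norm_add_le (m q) (m qbar)
      have h8 : ‖(1:ℝ)/2‖ = 1/2 := by
        rw [Real.norm_eq_abs]; norm_num
      rw [h8]; nlinarith
    nlinarith [norm_nonneg (m qbar)]
  have hc1 := hconv q hqQ (m q) (m qbar)
  have hA : I (m q) q ≤ I (((1:ℝ)/2) • (m q + m qbar)) q := hmin q hqQ _
  have hB : M ≤ I (((1:ℝ)/2) • (m q + m qbar)) qbar := hmin qbar hqbar _
  have d1 := abs_lt.mp (hq _ hmem1)
  have d2 := abs_lt.mp (hq _ hmid)
  have key : c * ‖m q - m qbar‖ ^ 2 < c * ε ^ 2 / 2 := by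
    linarith [d1.1, d1.2, d2.1, d2.2]
  rw [dist_eq_norm]
  by_contra hcon
  push_neg at hcon
  have h9 : ε ^ 2 ≤ ‖m q - m qbar‖ ^ 2 := pow_le_pow_left₀ hε.le hcon 2
  nlinarith [key]
end
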